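/- arXiv:2309.15763 — 8 statements merged into one kernel-verified Lean document; each statement's English description precedes it below -/
import Mathlib

section
/- Let CS be an axiomatically appropriate constant specification for JD. For every formula A, if JD_CS ⊢ A then there exists a justification term t such that JD_CS ⊢ t:A. -/
/-- Justification terms: constants, variables, application, sum, bang. -/
inductive Tm : Type
  | const : Nat → Tm
  | var   : Nat → Tm
  | app   : Tm → Tm → Tm
  | sum   : Tm → Tm → Tm
  | bang  : Tm → Tm

/-- Formulas of justification logic. -/
inductive Fm : Type
  | prop : Nat → Fm
  | bot  : Fm
  | imp  : Fm → Fm → Fm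
  | just : Tm → Fm → Fm

/-- ¬A := A → ⊥ -/
def Fm.neg (A : Fm) : Fm := Fm.imp A Fm.bot
/-- ⊤ := ¬⊥ -/
def Fm.top : Fm := Fm.neg Fm.bot
/-- A ∨ B := ¬A → B -/
def Fm.disj (A B : Fm) : Fm := Fm.imp (Fm.neg A) B
/-- A ∧ B := ¬(A → ¬B) -/
def Fm.conj (A B : Fm) : Fm := Fm.neg (Fm.imp A (Fm.neg B))

/-- A classical propositional tautology in this language: true under every
Boolean valuation that respects ⊥ and →, treating `t:F` and atoms as arbitrary atoms. -/
def IsTaut (A : Fm) : Prop :=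
  ∀ v : Fm → Bool,
    v Fm.bot = false →
    (∀ F G : Fm, v (Fm.imp F G) = (!(v F) || v G)) →
    v A = true

/-- !^n t -/
def bangIter : Nat → Tm → Tm
  | 0, t => t
  | n + 1, t => Tm.bang (bangIter n t)

/-- `anFm n c A` is the formula !^n c : !^{n-1} c : ... : !c : c : A. -/
def anFm : Nat → Tm → Fm → Fm
  | 0, c, A => Fm.just c A
  | n + 1, c, A => Fm.just (bangIter (n + 1) c) (anFm n c A)

/-- Axioms of JD: classical tautologies, j+, j, jd. -/
inductive JDAxiom : Fm → Prop
  | cl {A : Fm} : IsTaut A → JDAxiom A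
  | jplus (s t : Tm) (A : Fm) :
      JDAxiom (Fm.imp (Fm.disj (Fm.just s A) (Fm.just t A)) (Fm.just (Tm.sum s t) A))
  | j (s t : Tm) (A B : Fm) :
      JDAxiom (Fm.imp (Fm.just s (Fm.imp A B)) (Fm.imp (Fm.just t A) (Fm.just (Tm.app s t) B)))
  | jd (t : Tm) : JDAxiom (Fm.neg (Fm.just t Fm.bot))

/-- Axioms of JNoC: classical tautologies, j+, j, noc. -/
inductive JNoCAxiom : Fm → Prop
  | cl {A : Fm} : IsTaut A → JNoCAxiom A
  | jplus (s t : Tm) (A : Fm) :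
      JNoCAxiom (Fm.imp (Fm.disj (Fm.just s A) (Fm.just t A)) (Fm.just (Tm.sum s t) A))
  | j (s t : Tm) (A B : Fm) :
      JNoCAxiom (Fm.imp (Fm.just s (Fm.imp A B)) (Fm.imp (Fm.just t A) (Fm.just (Tm.app s t) B)))
  | noc (t : Tm) (A : Fm) :
      JNoCAxiom (Fm.neg (Fm.conj (Fm.just t A) (Fm.just t (Fm.neg A))))

/-- A constant specification for the logic with axioms `Ax`: a set of pairs (c, A)
where c is (the index of) a constant and A is an axiom. -/
def IsConstSpec (Ax : Fm → Prop) (CS : Set (Nat × Fm)) : Prop :=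
  ∀ p ∈ CS, Ax p.2

/-- CS is axiomatically appropriate: every axiom is justified by some constant. -/
def AxAppropriate (Ax : Fm → Prop) (CS : Set (Nat × Fm)) : Prop :=
  ∀ A : Fm, Ax A → ∃ c : Nat, (c, A) ∈ CS

/-- Hilbert-style derivability from axioms `Ax`, modus ponens, and axiom necessitation. -/
inductive Deriv (Ax : Fm → Prop) (CS : Set (Nat × Fm)) : Fm → Prop
  | ax {A : Fm} : Ax A → Deriv Ax CS A
  | mp {A B : Fm} : Deriv Ax CS (Fm.imp A B) → Deriv Ax CS A → Deriv Ax CS B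
  | an {c : Nat} {A : Fm} (n : Nat) : (c, A) ∈ CS → Deriv Ax CS (anFm n (Tm.const c) A)

/-- A subset-model frame: worlds, normal worlds, valuation, evidence function. -/
structure SModel where
  W : Type
  W0 : Set W
  V : W → Fm → Prop
  E : W → Tm → Set W

/-- Truth set [A]. -/
def SModel.ts (M : SModel) (A : Fm) : Set M.W := {w : M.W | M.V w A}

/-- APP_ω(s,t). -/
def SModel.APP (M : SModel) (ω : M.W) (s t : Tm) : Set Fm :=
  {F : Fm | ∃ H : Fm, M.E ω s ⊆ M.ts (Fm.imp H F) ∧ M.E ω t ⊆ M.ts H}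

/-- The conditions common to general, D-arbitrary and NoC CS-subset models. -/
def CoreConds (CS : Set (Nat × Fm)) (M : SModel) : Prop :=
  M.W0.Nonempty ∧
  ∀ ω ∈ M.W0,
    (¬ M.V ω Fm.bot) ∧
    (∀ F G : Fm, M.V ω (Fm.imp F G) ↔ (¬ M.V ω F ∨ M.V ω G)) ∧
    (∀ (t : Tm) (F : Fm), M.V ω (Fm.just t F) ↔ M.E ω t ⊆ M.ts F) ∧
    (∀ s t : Tm, M.E ω (Tm.sum s t) ⊆ M.E ω s ∩ M.E ω t) ∧
    (∀ s t : Tm, M.E ω (Tm.app s t) ⊆ {υ : M.W | ∀ F ∈ M.APP ω s t, υ ∈ M.ts F}) ∧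
    (∀ (c : Nat) (A : Fm), (c, A) ∈ CS →
      M.E ω (Tm.const c) ⊆ M.ts A ∧
      ∀ n : Nat, M.E ω (bangIter (n + 1) (Tm.const c)) ⊆ M.ts (anFm n (Tm.const c) A))

/-- General CS-subset model: every E(ω,t) meets the normal worlds. -/
def IsGeneralModel (CS : Set (Nat × Fm)) (M : SModel) : Prop :=
  CoreConds CS M ∧ ∀ ω ∈ M.W0, ∀ t : Tm, ∃ υ ∈ M.W0, υ ∈ M.E ω t

/-- D-arbitrary CS-subset model: every E(ω,t) meets W_{¬⊥}. -/
def IsDArbModel (CS : Set (Nat × Fm)) (M : SModel) : Prop :=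
  CoreConds CS M ∧ ∀ ω ∈ M.W0, ∀ t : Tm, ∃ υ : M.W, ¬ M.V υ Fm.bot ∧ υ ∈ M.E ω t

/-- NoC CS-subset model: every E(ω,t) meets W_nc. -/
def IsNoCModel (CS : Set (Nat × Fm)) (M : SModel) : Prop :=
  CoreConds CS M ∧ ∀ ω ∈ M.W0, ∀ t : Tm,
    ∃ υ : M.W, (∀ A : Fm, ¬ M.V υ A ∨ ¬ M.V υ (Fm.neg A)) ∧ υ ∈ M.E ω t

def GeneralValid (CS : Set (Nat × Fm)) (F : Fm) : Prop :=
  ∀ M : SModel, IsGeneralModel CS M → ∀ ω ∈ M.W0, M.V ω F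

def DArbValid (CS : Set (Nat × Fm)) (F : Fm) : Prop :=
  ∀ M : SModel, IsDArbModel CS M → ∀ ω ∈ M.W0, M.V ω F

def NoCValid (CS : Set (Nat × Fm)) (F : Fm) : Prop :=
  ∀ M : SModel, IsNoCModel CS M → ∀ ω ∈ M.W0, M.V ω F

/-- Γ is consistent: no finite list of members of Γ lets the logic derive ⊥
(i.e. A₁ → ... → Aₙ → ⊥ is not derivable for A₁,...,Aₙ ∈ Γ). -/
def ConsistentSet (Ax : Fm → Prop) (CS : Set (Nat × Fm)) (Γ : Set Fm) : Prop :=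
  ¬ ∃ L : List Fm, (∀ A ∈ L, A ∈ Γ) ∧ Deriv Ax CS (L.foldr Fm.imp Fm.bot)

/-- Maximal consistent: consistent and every proper superset is inconsistent. -/
def MaxConsistent (Ax : Fm → Prop) (CS : Set (Nat × Fm)) (Γ : Set Fm) : Prop :=
  ConsistentSet Ax CS Γ ∧ ∀ Δ : Set Fm, Γ ⊂ Δ → ¬ ConsistentSet Ax CS Δ

/-- The canonical model: worlds are arbitrary sets of formulas, normal worlds are
the maximal consistent sets, V^C(Γ,F)=1 iff F ∈ Γ, E^C(Γ,t) = {Δ : Δ ⊇ Γ/t}. -/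
def canonicalModel (Ax : Fm → Prop) (CS : Set (Nat × Fm)) : SModel where
  W := Set Fm
  W0 := {Γ : Set Fm | MaxConsistent Ax CS Γ}
  V := fun Γ F => F ∈ Γ
  E := fun Γ t => {Δ : Set Fm | {F : Fm | Fm.just t F ∈ Γ} ⊆ Δ}

theorem Deriv.app_just {CS : Set (Nat × Fm)} {s t : Tm} {A B : Fm}
    (hs : Deriv JDAxiom CS (Fm.just s (Fm.imp A B))) (ht : Deriv JDAxiom CS (Fm.just t A)) :
    Deriv JDAxiom CS (Fm.just (Tm.app s t) B) :=
  .mp (.mp (.ax (JDAxiom.j s t A B)) hs) ht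

theorem stmt_0_general (CS : Set (Nat × Fm))
    (happ : AxAppropriate JDAxiom CS)
    (A : Fm) (h : Deriv JDAxiom CS A) :
    ∃ t : Tm, Deriv JDAxiom CS (Fm.just t A) := by
  induction h with
  | ax hA =>
      obtain ⟨c, hc⟩ := happ _ hA
      exact ⟨Tm.const c, Deriv.an 0 hc⟩
  | mp _ _ ihAB ihA =>
      obtain ⟨s, hs⟩ := ihAB
      obtain ⟨t, ht⟩ := ihA
      exact ⟨Tm.app s t, hs.app_just ht⟩
  | an n hc =>
      exact ⟨bangIter (n + 1) (Tm.const _), Deriv.an (n + 1) hc⟩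

/-- For axiomatically appropriate CS, JD_CS enjoys the lifting property:
if JD_CS ⊢ A then JD_CS ⊢ t:A for some term t. -/
theorem stmt_0 (CS : Set (Nat × Fm))
    (hCS : IsConstSpec JDAxiom CS) (happ : AxAppropriate JDAxiom CS)
    (A : Fm) (h : Deriv JDAxiom CS A) :
    ∃ t : Tm, Deriv JDAxiom CS (Fm.just t A) :=
  stmt_0_general CS happ A h
end

section
/- (Soundness of JD_CS for general subset models) Let CS be an arbitrary constant specification for JD. For every formula F, if JD_CS ⊢ F then F is general CS-valid. -/
/-!
Soundness is proved by induction on derivations, evaluating at a fixed normal world. The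
propositional clauses make tautologies true there, the evidence conditions for `+`, `·` and the
constants validate j+, j and axiom necessitation, and jd holds because every `E(ω, t)` contains a
normal world, at which `⊥` is false.
-/

theorem IsTaut.holds {A : Fm} (hA : IsTaut A) (v : Fm → Prop) (hbot : ¬ v Fm.bot)
    (himp : ∀ F G : Fm, v (Fm.imp F G) ↔ (¬ v F ∨ v G)) : v A := by
  classical
  simpa using hA (fun G => decide (v G)) (by simpa using hbot) fun F G => by
    by_cases hF : v F <;> by_cases hG : v G <;> simp [himp, hF, hG]

namespace CoreConds

variable {CS : Set (Nat × Fm)} {M : SModel} {ω : M.W}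

theorem V_imp (hM : CoreConds CS M) (hω : ω ∈ M.W0) {F G : Fm} :
    M.V ω (Fm.imp F G) ↔ (M.V ω F → M.V ω G) := by
  rw [((hM.2 ω hω).2.1 F G), imp_iff_not_or]

theorem V_neg (hM : CoreConds CS M) (hω : ω ∈ M.W0) {F : Fm} :
    M.V ω F.neg ↔ ¬ M.V ω F := by
  simp only [Fm.neg, hM.V_imp hω, (hM.2 ω hω).1, imp_false]

theorem V_disj (hM : CoreConds CS M) (hω : ω ∈ M.W0) {F G : Fm} :
    M.V ω (F.disj G) ↔ M.V ω F ∨ M.V ω G := by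
  rw [Fm.disj, hM.V_imp hω, hM.V_neg hω, or_iff_not_imp_left]

theorem V_just (hM : CoreConds CS M) (hω : ω ∈ M.W0) {t : Tm} {F : Fm} :
    M.V ω (Fm.just t F) ↔ M.E ω t ⊆ M.ts F :=
  (hM.2 ω hω).2.2.1 t F

theorem V_of_isTaut (hM : CoreConds CS M) (hω : ω ∈ M.W0) {A : Fm} (hA : IsTaut A) :
    M.V ω A :=
  hA.holds (M.V ω) (hM.2 ω hω).1 (hM.2 ω hω).2.1

theorem V_jplus (hM : CoreConds CS M) (hω : ω ∈ M.W0) (s t : Tm) (A : Fm) :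
    M.V ω (Fm.imp (Fm.disj (Fm.just s A) (Fm.just t A)) (Fm.just (Tm.sum s t) A)) := by
  obtain ⟨-, -, -, hsum, -, -⟩ := hM.2 ω hω
  simp only [hM.V_imp hω, hM.V_disj hω, hM.V_just hω]
  rintro (hs | ht) υ hυ
  · exact hs (hsum s t hυ).1
  · exact ht (hsum s t hυ).2

theorem V_j (hM : CoreConds CS M) (hω : ω ∈ M.W0) (s t : Tm) (A B : Fm) :
    M.V ω (Fm.imp (Fm.just s (Fm.imp A B)) (Fm.imp (Fm.just t A) (Fm.just (Tm.app s t) B))) := by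
  obtain ⟨-, -, -, -, happ, -⟩ := hM.2 ω hω
  simp only [hM.V_imp hω, hM.V_just hω]
  intro hs ht υ hυ
  exact happ s t hυ B ⟨A, hs, ht⟩

theorem V_anFm (hM : CoreConds CS M) (hω : ω ∈ M.W0) {c : Nat} {A : Fm} (hc : (c, A) ∈ CS) :
    ∀ n, M.V ω (anFm n (Tm.const c) A) := by
  obtain ⟨-, -, -, -, -, hcs⟩ := hM.2 ω hω
  rintro (_ | n)
  · exact (hM.V_just hω).2 (hcs c A hc).1
  · exact (hM.V_just hω).2 ((hcs c A hc).2 n)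

end CoreConds

namespace IsGeneralModel

variable {CS : Set (Nat × Fm)} {M : SModel} {ω : M.W}

theorem V_jd (hM : IsGeneralModel CS M) (hω : ω ∈ M.W0) (t : Tm) :
    M.V ω (Fm.just t Fm.bot).neg := by
  rw [hM.1.V_neg hω, hM.1.V_just hω]
  intro hsub
  obtain ⟨υ, hυ, hυt⟩ := hM.2 ω hω t
  exact (hM.1.2 υ hυ).1 (hsub hυt)

theorem V_of_JDAxiom (hM : IsGeneralModel CS M) (hω : ω ∈ M.W0) {A : Fm} (hA : JDAxiom A) :
    M.V ω A := by
  cases hA with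
  | cl hT => exact hM.1.V_of_isTaut hω hT
  | jplus s t A => exact hM.1.V_jplus hω s t A
  | j s t A B => exact hM.1.V_j hω s t A B
  | jd t => exact hM.V_jd hω t

end IsGeneralModel

theorem stmt_1_general (CS : Set (Nat × Fm))
    (F : Fm) (h : Deriv JDAxiom CS F) :
    GeneralValid CS F := by
  intro M hM ω hω
  induction h with
  | ax hA => exact hM.V_of_JDAxiom hω hA
  | mp _ _ ihAB ihA => exact (hM.1.V_imp hω).1 ihAB ihA
  | an n hc => exact hM.1.V_anFm hω hc n

/-- Soundness of JD_CS with respect to general CS-subset models, for arbitrary CS. -/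
theorem stmt_1 (CS : Set (Nat × Fm)) (hCS : IsConstSpec JDAxiom CS)
    (F : Fm) (h : Deriv JDAxiom CS F) :
    GeneralValid CS F :=
  stmt_1_general CS F h
end

section
/- (Completeness of JD_CS for general subset models) Let CS be an axiomatically appropriate constant specification for JD. For every formula F, if F is general CS-valid then JD_CS ⊢ F. -/
/-!
If `F` is not derivable, `{¬F}` is consistent and extends (Zorn) to a maximal consistent set `Γ`.
In the canonical model, whose worlds are all sets of formulas, whose normal worlds are the maximal
consistent sets and where `E(Γ, t)` consists of the supersets of `Γ/t = {F | t:F ∈ Γ}`, truth at a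
normal world is membership, so validity of `F` would put both `F` and `¬F` into `Γ`. The canonical
model is a general CS-subset model: the closure conditions on `E` come from `j`, `j+` and axiom
necessitation, and `E(Γ, t)` meets the normal worlds because `Γ/t` is consistent. That last point
is where axiomatic appropriateness enters: it lets every derivation be internalized as `s:A`, so a
refutation of `Γ/t` would yield some `u:⊥ ∈ Γ`, which `jd` forbids.
-/

theorem foldr_imp_eval_eq_true {v : Fm → Bool}
    (himp : ∀ F G : Fm, v (Fm.imp F G) = (!(v F) || v G)) (L : List Fm) (B : Fm) :
    v (L.foldr Fm.imp B) = true ↔ ((∀ A ∈ L, v A = true) → v B = true) := by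
  induction L with
  | nil => simp
  | cons A L ih => cases hA : v A <;> simp [himp, hA, ih]

theorem isTaut_foldr_imp_mp (L₁ L₂ : List Fm) (A B : Fm) :
    IsTaut ((L₁.foldr Fm.imp (A.imp B)).imp
      ((L₂.foldr Fm.imp A).imp ((L₁ ++ L₂).foldr Fm.imp B))) := by
  intro v _ himp
  simp only [himp, Bool.or_eq_true, Bool.not_eq_true', Bool.eq_false_iff, ne_eq,
    foldr_imp_eval_eq_true himp, List.mem_append]
  grind

theorem isTaut_foldr_imp_deduction {L L' : List Fm} {A : Fm} (B : Fm)
    (hL : ∀ X ∈ L, X ∈ A :: L') :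
    IsTaut ((L.foldr Fm.imp B).imp (L'.foldr Fm.imp (A.imp B))) := by
  intro v _ himp
  simp only [himp, Bool.or_eq_true, Bool.not_eq_true', Bool.eq_false_iff, ne_eq,
    foldr_imp_eval_eq_true himp]
  simp only [List.mem_cons] at hL
  grind

theorem isTaut_imp_self (A : Fm) : IsTaut (A.imp A) := by
  intro v _ himp
  rw [himp]
  cases v A <;> rfl

theorem isTaut_bot_imp (A : Fm) : IsTaut (Fm.bot.imp A) := by
  intro v hbot himp
  rw [himp, hbot]
  rfl

theorem isTaut_neg_neg_imp (A : Fm) : IsTaut (A.neg.neg.imp A) := by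
  intro v hbot himp
  simp only [Fm.neg, himp, hbot]
  cases v A <;> rfl

def DerivFrom (Ax : Fm → Prop) (CS : Set (Nat × Fm)) (Γ : Set Fm) (B : Fm) : Prop :=
  ∃ L : List Fm, (∀ A ∈ L, A ∈ Γ) ∧ Deriv Ax CS (L.foldr Fm.imp B)

section Propositional

variable {Ax : Fm → Prop} {CS : Set (Nat × Fm)} {Γ : Set Fm} {A B : Fm}

theorem DerivFrom.of_deriv (h : Deriv Ax CS B) : DerivFrom Ax CS Γ B :=
  ⟨[], by simp, h⟩

theorem DerivFrom.mono (h : DerivFrom Ax CS Γ B) {Δ : Set Fm} (hΓΔ : Γ ⊆ Δ) :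
    DerivFrom Ax CS Δ B :=
  let ⟨L, hL, d⟩ := h
  ⟨L, fun X hX => hΓΔ (hL X hX), d⟩

theorem DerivFrom.of_mem (hcl : ∀ {A}, IsTaut A → Ax A) (h : B ∈ Γ) : DerivFrom Ax CS Γ B :=
  ⟨[B], by simpa using h, Deriv.ax (hcl (isTaut_imp_self B))⟩

theorem DerivFrom.mp (hcl : ∀ {A}, IsTaut A → Ax A) (h₁ : DerivFrom Ax CS Γ (A.imp B))
    (h₂ : DerivFrom Ax CS Γ A) : DerivFrom Ax CS Γ B := by
  obtain ⟨L₁, hL₁, d₁⟩ := h₁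
  obtain ⟨L₂, hL₂, d₂⟩ := h₂
  refine ⟨L₁ ++ L₂, fun X hX => (List.mem_append.1 hX).elim (hL₁ X) (hL₂ X), ?_⟩
  exact (Deriv.ax (hcl (isTaut_foldr_imp_mp L₁ L₂ A B))).mp d₁ |>.mp d₂

theorem DerivFrom.of_bot (hcl : ∀ {A}, IsTaut A → Ax A) (h : DerivFrom Ax CS Γ Fm.bot) :
    DerivFrom Ax CS Γ B :=
  (DerivFrom.of_deriv (Deriv.ax (hcl (isTaut_bot_imp B)))).mp hcl h

theorem DerivFrom.deduction (hcl : ∀ {A}, IsTaut A → Ax A)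
    (h : DerivFrom Ax CS (insert A Γ) B) : DerivFrom Ax CS Γ (A.imp B) := by
  classical
  obtain ⟨L, hL, d⟩ := h
  refine ⟨L.filter (· ≠ A), fun X hX => ?_, ?_⟩
  · obtain ⟨hXL, hXA⟩ := List.mem_filter.1 hX
    exact (hL X hXL).resolve_left (by simpa using hXA)
  · refine (Deriv.ax (hcl (isTaut_foldr_imp_deduction B fun X hX => ?_))).mp d
    by_cases hXA : X = A
    · exact hXA ▸ List.mem_cons_self
    · exact List.mem_cons_of_mem _ (List.mem_filter.2 ⟨hX, by simpa using hXA⟩)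

theorem consistentSet_singleton_neg (hcl : ∀ {A}, IsTaut A → Ax A) (h : ¬ Deriv Ax CS A) :
    ConsistentSet Ax CS {A.neg} := by
  intro hinc
  obtain ⟨L, hL, d⟩ := DerivFrom.deduction (Γ := ∅) hcl (by rwa [← Set.singleton_def])
  obtain rfl : L = [] := List.eq_nil_iff_forall_not_mem.2 hL
  exact h ((Deriv.ax (hcl (isTaut_neg_neg_imp A))).mp d)

theorem consistentSet_sUnion {c : Set (Set Fm)} (hc : IsChain (· ⊆ ·) c) (hne : c.Nonempty)
    (h : ∀ Δ ∈ c, ConsistentSet Ax CS Δ) : ConsistentSet Ax CS (⋃₀ c) := by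
  rintro ⟨L, hL, d⟩
  obtain ⟨Δ, hΔ, hLΔ⟩ := hc.directedOn.exists_mem_subset_of_finite_of_subset_sUnion hne
    L.finite_toSet hL
  exact h Δ hΔ ⟨L, hLΔ, d⟩

theorem exists_maxConsistent_superset (h : ConsistentSet Ax CS Γ) :
    ∃ Δ, Γ ⊆ Δ ∧ MaxConsistent Ax CS Δ := by
  obtain ⟨Δ, hΓΔ, hmax⟩ := zorn_subset_nonempty {Δ | Γ ⊆ Δ ∧ ConsistentSet Ax CS Δ}
    (fun c hcS hc hne => ⟨⋃₀ c,
      ⟨(hcS hne.some_mem).1.trans (Set.subset_sUnion_of_mem hne.some_mem),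
        consistentSet_sUnion hc hne fun Δ hΔ => (hcS hΔ).2⟩,
      fun _ => Set.subset_sUnion_of_mem⟩) Γ ⟨le_rfl, h⟩
  refine ⟨Δ, hΓΔ, hmax.prop.2, fun Δ' hΔ' hcons => hΔ'.not_subset ?_⟩
  exact hmax.le_of_ge ⟨hΓΔ.trans hΔ'.subset, hcons⟩ hΔ'.subset

namespace MaxConsistent

theorem derivFrom_neg_of_notMem (hcl : ∀ {A}, IsTaut A → Ax A) (hΓ : MaxConsistent Ax CS Γ)
    (hA : A ∉ Γ) : DerivFrom Ax CS Γ A.neg :=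
  DerivFrom.deduction hcl (not_not.1 (hΓ.2 _ (Set.ssubset_insert hA)))

theorem mem_of_derivFrom (hcl : ∀ {A}, IsTaut A → Ax A) (hΓ : MaxConsistent Ax CS Γ)
    (h : DerivFrom Ax CS Γ A) : A ∈ Γ :=
  by_contra fun hA => hΓ.1 ((hΓ.derivFrom_neg_of_notMem hcl hA).mp hcl h)

theorem mem_of_deriv (hcl : ∀ {A}, IsTaut A → Ax A) (hΓ : MaxConsistent Ax CS Γ)
    (h : Deriv Ax CS A) : A ∈ Γ :=
  hΓ.mem_of_derivFrom hcl (.of_deriv h)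

theorem bot_notMem (hcl : ∀ {A}, IsTaut A → Ax A) (hΓ : MaxConsistent Ax CS Γ) :
    Fm.bot ∉ Γ :=
  fun h => hΓ.1 (DerivFrom.of_mem hcl h)

theorem imp_mem_iff (hcl : ∀ {A}, IsTaut A → Ax A) (hΓ : MaxConsistent Ax CS Γ) :
    A.imp B ∈ Γ ↔ A ∉ Γ ∨ B ∈ Γ := by
  refine ⟨fun h => or_iff_not_imp_left.2 fun hA => ?_, fun h => hΓ.mem_of_derivFrom hcl ?_⟩
  · exact hΓ.mem_of_derivFrom hcl ((DerivFrom.of_mem hcl h).mp hcl (.of_mem hcl (not_not.1 hA)))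
  · refine DerivFrom.deduction hcl ?_
    rcases h with hA | hB
    · exact .of_bot hcl (((hΓ.derivFrom_neg_of_notMem hcl hA).mono (Set.subset_insert A Γ)).mp
        hcl (.of_mem hcl (Set.mem_insert A Γ)))
    · exact .of_mem hcl (Set.mem_insert_of_mem A hB)

theorem mem_of_imp_mem (hcl : ∀ {A}, IsTaut A → Ax A) (hΓ : MaxConsistent Ax CS Γ)
    (h : A.imp B ∈ Γ) (hA : A ∈ Γ) : B ∈ Γ :=
  ((hΓ.imp_mem_iff hcl).1 h).resolve_left (not_not.2 hA)

theorem neg_mem_iff (hcl : ∀ {A}, IsTaut A → Ax A) (hΓ : MaxConsistent Ax CS Γ) :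
    A.neg ∈ Γ ↔ A ∉ Γ := by
  rw [Fm.neg, hΓ.imp_mem_iff hcl, or_iff_left (hΓ.bot_notMem hcl)]

theorem disj_mem_iff (hcl : ∀ {A}, IsTaut A → Ax A) (hΓ : MaxConsistent Ax CS Γ) :
    Fm.disj A B ∈ Γ ↔ A ∈ Γ ∨ B ∈ Γ := by
  rw [Fm.disj, hΓ.imp_mem_iff hcl, hΓ.neg_mem_iff hcl, not_not]

end MaxConsistent

end Propositional

section JD

variable {CS : Set (Nat × Fm)} {Γ : Set Fm}

theorem Deriv.exists_just (happ : AxAppropriate JDAxiom CS) {A : Fm}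
    (h : Deriv JDAxiom CS A) : ∃ s : Tm, Deriv JDAxiom CS (Fm.just s A) := by
  induction h with
  | ax hA =>
    obtain ⟨c, hc⟩ := happ _ hA
    exact ⟨Tm.const c, Deriv.an 0 hc⟩
  | mp _ _ ih₁ ih₂ =>
    obtain ⟨s, hs⟩ := ih₁
    obtain ⟨r, hr⟩ := ih₂
    exact ⟨Tm.app s r, ((Deriv.ax (JDAxiom.j s r _ _)).mp hs).mp hr⟩
  | an n hc => exact ⟨_, Deriv.an (n + 1) hc⟩

namespace MaxConsistent

theorem just_app_mem (hΓ : MaxConsistent JDAxiom CS Γ) {s t : Tm} {A B : Fm}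
    (hs : Fm.just s (A.imp B) ∈ Γ) (ht : Fm.just t A ∈ Γ) : Fm.just (Tm.app s t) B ∈ Γ :=
  hΓ.mem_of_imp_mem JDAxiom.cl (hΓ.mem_of_imp_mem JDAxiom.cl
    (hΓ.mem_of_deriv JDAxiom.cl (Deriv.ax (JDAxiom.j s t A B))) hs) ht

theorem just_sum_mem (hΓ : MaxConsistent JDAxiom CS Γ) {s t : Tm} {A : Fm}
    (h : Fm.just s A ∈ Γ ∨ Fm.just t A ∈ Γ) : Fm.just (Tm.sum s t) A ∈ Γ :=
  hΓ.mem_of_imp_mem JDAxiom.cl (hΓ.mem_of_deriv JDAxiom.cl (Deriv.ax (JDAxiom.jplus s t A)))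
    ((hΓ.disj_mem_iff JDAxiom.cl).2 h)

theorem exists_just_mem_of_just_foldr_mem (hΓ : MaxConsistent JDAxiom CS Γ) {t : Tm}
    {B : Fm} {L : List Fm} (hL : ∀ F ∈ L, Fm.just t F ∈ Γ) {s : Tm}
    (hs : Fm.just s (L.foldr Fm.imp B) ∈ Γ) : ∃ u : Tm, Fm.just u B ∈ Γ := by
  induction L generalizing s with
  | nil => exact ⟨s, hs⟩
  | cons A L ih =>
    exact ih (fun F hF => hL F (List.mem_cons_of_mem A hF))
      (hΓ.just_app_mem hs (hL A List.mem_cons_self))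

/-- Internalizing a refutation of `Γ/t` would put some `u:⊥` into `Γ`, against `jd`. -/
theorem consistentSet_slash (happ : AxAppropriate JDAxiom CS)
    (hΓ : MaxConsistent JDAxiom CS Γ) (t : Tm) :
    ConsistentSet JDAxiom CS {F | Fm.just t F ∈ Γ} := by
  rintro ⟨L, hL, d⟩
  obtain ⟨s, hs⟩ := d.exists_just happ
  obtain ⟨u, hu⟩ := hΓ.exists_just_mem_of_just_foldr_mem hL (hΓ.mem_of_deriv JDAxiom.cl hs)
  exact (hΓ.neg_mem_iff JDAxiom.cl).1
    (hΓ.mem_of_deriv JDAxiom.cl (Deriv.ax (JDAxiom.jd u))) hu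

end MaxConsistent

theorem canonicalModel_E_subset_ts_iff {Ax : Fm → Prop} (Γ : Set Fm) (t : Tm) (F : Fm) :
    (canonicalModel Ax CS).E Γ t ⊆ (canonicalModel Ax CS).ts F ↔ Fm.just t F ∈ Γ :=
  ⟨fun h => h (subset_refl {F | Fm.just t F ∈ Γ}), fun h _ hΔ => hΔ h⟩

theorem canonicalModel_coreConds (hne : ∃ Γ, MaxConsistent JDAxiom CS Γ) :
    CoreConds CS (canonicalModel JDAxiom CS) := by
  refine ⟨hne, fun Γ (hΓ : MaxConsistent JDAxiom CS Γ) => ⟨hΓ.bot_notMem JDAxiom.cl,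
    fun F G => hΓ.imp_mem_iff JDAxiom.cl, fun t F => (canonicalModel_E_subset_ts_iff Γ t F).symm,
    ?sum, ?app, ?cs⟩⟩
  case sum =>
    exact fun s t Δ hΔ => ⟨fun A hA => hΔ (hΓ.just_sum_mem (.inl hA)),
      fun A hA => hΔ (hΓ.just_sum_mem (.inr hA))⟩
  case app =>
    rintro s t Δ hΔ F ⟨H, hs, ht⟩
    exact hΔ (hΓ.just_app_mem ((canonicalModel_E_subset_ts_iff Γ s _).1 hs)
      ((canonicalModel_E_subset_ts_iff Γ t H).1 ht))
  case cs =>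
    exact fun c A hcA => ⟨(canonicalModel_E_subset_ts_iff Γ _ A).2
      (hΓ.mem_of_deriv JDAxiom.cl (Deriv.an 0 hcA)),
      fun n => (canonicalModel_E_subset_ts_iff Γ _ _).2
        (hΓ.mem_of_deriv JDAxiom.cl (Deriv.an (n + 1) hcA))⟩

theorem canonicalModel_isGeneralModel (happ : AxAppropriate JDAxiom CS)
    (hne : ∃ Γ, MaxConsistent JDAxiom CS Γ) :
    IsGeneralModel CS (canonicalModel JDAxiom CS) := by
  refine ⟨canonicalModel_coreConds hne, fun Γ hΓ t => ?_⟩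
  obtain ⟨Δ, hΓΔ, hΔ⟩ := exists_maxConsistent_superset (hΓ.consistentSet_slash happ t)
  exact ⟨Δ, hΔ, hΓΔ⟩

end JD

theorem stmt_2_general (CS : Set (Nat × Fm))
    (happ : AxAppropriate JDAxiom CS)
    (F : Fm) (h : GeneralValid CS F) :
    Deriv JDAxiom CS F := by
  by_contra hF
  obtain ⟨Γ, hnegΓ, hΓ⟩ :=
    exists_maxConsistent_superset (consistentSet_singleton_neg JDAxiom.cl hF)
  have hFΓ : F ∈ Γ := h _ (canonicalModel_isGeneralModel happ ⟨Γ, hΓ⟩) Γ hΓ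
  exact (hΓ.neg_mem_iff JDAxiom.cl).1 (hnegΓ rfl) hFΓ

/-- Completeness of JD_CS with respect to general CS-subset models,
for axiomatically appropriate CS. -/
theorem stmt_2 (CS : Set (Nat × Fm))
    (hCS : IsConstSpec JDAxiom CS) (happ : AxAppropriate JDAxiom CS)
    (F : Fm) (h : GeneralValid CS F) :
    Deriv JDAxiom CS F :=
  stmt_2_general CS happ F h
end

section
/- (Soundness of JNoC_CS for NoC subset models) Let CS be an arbitrary constant specification for JNoC. For every formula F, if JNoC_CS ⊢ F then F is NoC CS-valid. -/
/-! Each axiom holds at every normal world by a direct appeal to the matching model condition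
(`noc` uses the non-contradictory world that every evidence set contains), axiom necessitation
is exactly the constant-specification condition, and modus ponens preserves truth at normal
worlds because implication is evaluated classically there. -/

namespace CoreConds

variable {CS : Set (Nat × Fm)} {M : SModel} (hM : CoreConds CS M) {ω : M.W} (hω : ω ∈ M.W0)
include hM hω

theorem not_bot : ¬ M.V ω Fm.bot :=
  (hM.2 ω hω).1

theorem imp_iff (F G : Fm) : M.V ω (Fm.imp F G) ↔ (M.V ω F → M.V ω G) :=
  ((hM.2 ω hω).2.1 F G).trans imp_iff_not_or.symm

theorem just_iff (t : Tm) (F : Fm) : M.V ω (Fm.just t F) ↔ M.E ω t ⊆ M.ts F :=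
  (hM.2 ω hω).2.2.1 t F

theorem neg_iff (F : Fm) : M.V ω F.neg ↔ ¬ M.V ω F := by
  rw [Fm.neg, hM.imp_iff hω]
  exact ⟨fun h hF => hM.not_bot hω (h hF), fun h hF => (h hF).elim⟩

theorem disj_iff (F G : Fm) : M.V ω (Fm.disj F G) ↔ M.V ω F ∨ M.V ω G := by
  rw [Fm.disj, hM.imp_iff hω, hM.neg_iff hω, or_iff_not_imp_left]

theorem conj_iff (F G : Fm) : M.V ω (Fm.conj F G) ↔ M.V ω F ∧ M.V ω G := by
  rw [Fm.conj, hM.neg_iff hω, hM.imp_iff hω, hM.neg_iff hω]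
  tauto

theorem holds_of_isTaut {A : Fm} (hA : IsTaut A) : M.V ω A := by
  classical
  have hv := hA (fun F => decide (M.V ω F)) (by simpa using hM.not_bot hω) fun F G => by
    by_cases hF : M.V ω F <;> by_cases hG : M.V ω G <;> simp [hM.imp_iff hω, hF, hG]
  simpa using hv

theorem holds_jplus (s t : Tm) (A : Fm) :
    M.V ω (Fm.imp (Fm.disj (Fm.just s A) (Fm.just t A)) (Fm.just (Tm.sum s t) A)) := by
  rw [hM.imp_iff hω, hM.disj_iff hω, hM.just_iff hω, hM.just_iff hω, hM.just_iff hω]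
  have hsum := (hM.2 ω hω).2.2.2.1 s t
  rintro (hs | ht)
  · exact fun υ hυ => hs (hsum hυ).1
  · exact fun υ hυ => ht (hsum hυ).2

theorem holds_j (s t : Tm) (A B : Fm) :
    M.V ω (Fm.imp (Fm.just s (Fm.imp A B)) (Fm.imp (Fm.just t A) (Fm.just (Tm.app s t) B))) := by
  simp only [hM.imp_iff hω, hM.just_iff hω]
  exact fun hs ht υ hυ => (hM.2 ω hω).2.2.2.2.1 s t hυ B ⟨A, hs, ht⟩

theorem holds_anFm {c : Nat} {A : Fm} (hc : (c, A) ∈ CS) (n : Nat) :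
    M.V ω (anFm n (Tm.const c) A) := by
  have hcs := (hM.2 ω hω).2.2.2.2.2 c A hc
  cases n with
  | zero => exact (hM.just_iff hω _ _).2 hcs.1
  | succ m => exact (hM.just_iff hω _ _).2 (hcs.2 m)

end CoreConds

namespace IsNoCModel

variable {CS : Set (Nat × Fm)} {M : SModel} (hM : IsNoCModel CS M) {ω : M.W} (hω : ω ∈ M.W0)
include hM hω

theorem holds_noc (t : Tm) (A : Fm) :
    M.V ω (Fm.neg (Fm.conj (Fm.just t A) (Fm.just t (Fm.neg A)))) := by
  rw [hM.1.neg_iff hω, hM.1.conj_iff hω, hM.1.just_iff hω, hM.1.just_iff hω]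
  rintro ⟨hA, hnA⟩
  obtain ⟨υ, hυnc, hυ⟩ := hM.2 ω hω t
  exact (hυnc A).elim (· (hA hυ)) (· (hnA hυ))

theorem holds_of_JNoCAxiom {A : Fm} (hA : JNoCAxiom A) : M.V ω A := by
  cases hA with
  | cl h => exact hM.1.holds_of_isTaut hω h
  | jplus s t A => exact hM.1.holds_jplus hω s t A
  | j s t A B => exact hM.1.holds_j hω s t A B
  | noc t A => exact hM.holds_noc hω t A

end IsNoCModel

theorem stmt_6_general (CS : Set (Nat × Fm))
    (F : Fm) (h : Deriv JNoCAxiom CS F) :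
    NoCValid CS F := by
  induction h with
  | ax hA => exact fun M hM ω hω => hM.holds_of_JNoCAxiom hω hA
  | mp _ _ ihAB ihA =>
    exact fun M hM ω hω => (hM.1.imp_iff hω _ _).1 (ihAB M hM ω hω) (ihA M hM ω hω)
  | an n hc => exact fun M hM ω hω => hM.1.holds_anFm hω hc n

/-- Soundness of JNoC_CS with respect to NoC CS-subset models, for arbitrary CS. -/
theorem stmt_6 (CS : Set (Nat × Fm)) (hCS : IsConstSpec JNoCAxiom CS)
    (F : Fm) (h : Deriv JNoCAxiom CS F) :
    NoCValid CS F :=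
  stmt_6_general CS F h
end

section
/- Let CS be an arbitrary constant specification for JD. Then JD_CS proves every instance of the axiom schema noc, i.e. JD_CS ⊢ ¬(t:A ∧ t:¬A) for every justification term t and every formula A. -/
theorem isTaut_neg_conj_of_imp_imp (P Q R : Fm) :
    IsTaut (Fm.imp (Fm.imp P (Fm.imp Q R)) (Fm.imp (Fm.neg R) (Fm.neg (Fm.conj Q P)))) := by
  intro v hbot himp
  simp only [Fm.conj, Fm.neg, himp, hbot]
  cases v P <;> cases v Q <;> cases v R <;> rfl

/-- Justifications of `A` and of `¬A` combine by `j` into a justification `s·t:⊥`, which `jd`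
refutes. -/
theorem deriv_jd_not_just_and_just_neg (CS : Set (Nat × Fm)) (s t : Tm) (A : Fm) :
    Deriv JDAxiom CS (Fm.neg (Fm.conj (Fm.just t A) (Fm.just s (Fm.neg A)))) :=
  .mp (.mp (.ax (.cl (isTaut_neg_conj_of_imp_imp _ _ _))) (.ax (.j s t A Fm.bot)))
    (.ax (.jd (Tm.app s t)))

theorem stmt_10_general (CS : Set (Nat × Fm))
    (t : Tm) (A : Fm) :
    Deriv JDAxiom CS (Fm.neg (Fm.conj (Fm.just t A) (Fm.just t (Fm.neg A)))) :=
  deriv_jd_not_just_and_just_neg CS t t A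

/-- For arbitrary CS, JD_CS proves every instance of the schema noc: ¬(t:A ∧ t:¬A). -/
theorem stmt_10 (CS : Set (Nat × Fm)) (hCS : IsConstSpec JDAxiom CS)
    (t : Tm) (A : Fm) :
    Deriv JDAxiom CS (Fm.neg (Fm.conj (Fm.just t A) (Fm.just t (Fm.neg A)))) :=
  stmt_10_general CS t A
end

section
/- Let CS be an axiomatically appropriate constant specification for JNoC. Then JNoC_CS proves ¬(t:⊥) for every justification term t. -/
/-! The constant `c` justifying the tautology `⊤ = ¬⊥` makes `(c + t):¬⊥` derivable, so by
`noc` the term `c + t` cannot justify `⊥`; since `t:⊥ → (c + t):⊥` by `j+`, neither can `t`. -/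

theorem isTaut_top : IsTaut Fm.top := by
  intro v hbot himp
  simp [Fm.top, Fm.neg, himp, hbot]

theorem Deriv.mp_of_isTaut {Ax : Fm → Prop} {CS : Set (Nat × Fm)} {A B : Fm}
    (hcl : ∀ {F : Fm}, IsTaut F → Ax F) (hAB : IsTaut (Fm.imp A B)) (hA : Deriv Ax CS A) :
    Deriv Ax CS B :=
  .mp (.ax (hcl hAB)) hA

theorem Deriv.neg_of_imp_of_neg {Ax : Fm → Prop} {CS : Set (Nat × Fm)} {A B : Fm}
    (hcl : ∀ {F : Fm}, IsTaut F → Ax F) (hAB : Deriv Ax CS (Fm.imp A B))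
    (hB : Deriv Ax CS (Fm.neg B)) : Deriv Ax CS (Fm.neg A) := by
  refine .mp (.mp_of_isTaut hcl ?_ hAB) hB
  intro v hbot himp
  simp only [Fm.neg, himp, hbot]
  cases v A <;> cases v B <;> rfl

section JNoC

variable {CS : Set (Nat × Fm)}

theorem deriv_just_sum_left {s t : Tm} {A : Fm} (h : Deriv JNoCAxiom CS (Fm.just s A)) :
    Deriv JNoCAxiom CS (Fm.just (Tm.sum s t) A) := by
  refine .mp (.mp_of_isTaut JNoCAxiom.cl ?_ h) (.ax (.jplus s t A))
  intro v hbot himp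
  simp only [Fm.disj, Fm.neg, himp, hbot]
  cases v (Fm.just s A) <;> cases v (Fm.just t A) <;> cases v (Fm.just (Tm.sum s t) A) <;> rfl

theorem deriv_just_imp_just_sum_right (s t : Tm) (A : Fm) :
    Deriv JNoCAxiom CS (Fm.imp (Fm.just t A) (Fm.just (Tm.sum s t) A)) := by
  refine .mp_of_isTaut JNoCAxiom.cl ?_ (.ax (.jplus s t A))
  intro v hbot himp
  simp only [Fm.disj, Fm.neg, himp, hbot]
  cases v (Fm.just s A) <;> cases v (Fm.just t A) <;> cases v (Fm.just (Tm.sum s t) A) <;> rfl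

theorem deriv_neg_just_of_just_neg {t : Tm} {A : Fm}
    (h : Deriv JNoCAxiom CS (Fm.just t (Fm.neg A))) :
    Deriv JNoCAxiom CS (Fm.neg (Fm.just t A)) := by
  refine .mp (.mp_of_isTaut JNoCAxiom.cl ?_ (.ax (.noc t A))) h
  intro v hbot himp
  simp only [Fm.conj, Fm.neg, himp, hbot]
  cases v (Fm.just t A) <;> cases v (Fm.just t (Fm.imp A Fm.bot)) <;> rfl

end JNoC

theorem stmt_12_general (CS : Set (Nat × Fm))
    (happ : AxAppropriate JNoCAxiom CS)
    (t : Tm) :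
    Deriv JNoCAxiom CS (Fm.neg (Fm.just t Fm.bot)) := by
  obtain ⟨c, hc⟩ := happ Fm.top (.cl isTaut_top)
  have hsum_top : Deriv JNoCAxiom CS (Fm.just (Tm.sum (Tm.const c) t) Fm.top) :=
    deriv_just_sum_left (.an 0 hc)
  have hsum_not_bot : Deriv JNoCAxiom CS (Fm.neg (Fm.just (Tm.sum (Tm.const c) t) Fm.bot)) :=
    deriv_neg_just_of_just_neg hsum_top
  exact .neg_of_imp_of_neg JNoCAxiom.cl (deriv_just_imp_just_sum_right _ t Fm.bot) hsum_not_bot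

/-- For axiomatically appropriate CS, JNoC_CS proves ¬(t:⊥) for every term t. -/
theorem stmt_12 (CS : Set (Nat × Fm))
    (hCS : IsConstSpec JNoCAxiom CS) (happ : AxAppropriate JNoCAxiom CS)
    (t : Tm) :
    Deriv JNoCAxiom CS (Fm.neg (Fm.just t Fm.bot)) :=
  stmt_12_general CS happ t
end

section
/- For the empty constant specification CS = ∅, there exists a NoC CS-subset model M = (W, W₀, V, E), a world ω ∈ W₀, and a term t such that M, ω ⊩ t:⊥. Concretely, one may take W = {ω, ν}, W₀ = {ω}, V(ν,⊥) = 1 and V(ν,F) = 0 for all other formulas F (with V(ω,·) any valuation making ω a normal world), and E(υ,t) = {ν} for all worlds υ and all terms t. -/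
/-! The model has two worlds: `true` plays the normal world ω and `false` the world ν, where
exactly `⊥` holds. Every term has evidence `{ν}`, so `t:F` holds at ω iff `F = ⊥`; and since no
implication holds at ν, the application condition is vacuous. -/

def botModelVal : Fm → Prop
  | .prop _ => False
  | .bot => False
  | .imp F G => botModelVal F → botModelVal G
  | .just _ F => F = .bot

def botModel : SModel where
  W := Bool
  W0 := {true}
  V := fun w F => if w then botModelVal F else F = .bot
  E := fun _ _ => {false}

namespace botModel

theorem false_mem_ts_iff {F : Fm} : false ∈ botModel.ts F ↔ F = .bot := Iff.rfl

theorem E_subset_ts_iff (ω : Bool) (t : Tm) (F : Fm) :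
    botModel.E ω t ⊆ botModel.ts F ↔ F = .bot :=
  Set.singleton_subset_iff.trans false_mem_ts_iff

theorem APP_eq_empty (ω : Bool) (s t : Tm) : botModel.APP ω s t = ∅ := by
  refine Set.eq_empty_of_forall_notMem fun F ⟨H, hs, _⟩ => ?_
  cases (E_subset_ts_iff ω s _).1 hs

theorem false_noContradiction (A : Fm) : ¬ botModel.V false A ∨ ¬ botModel.V false A.neg :=
  Or.inr Fm.noConfusion

theorem coreConds : CoreConds ∅ botModel := by
  refine ⟨⟨true, rfl⟩, ?_⟩
  rintro ω (rfl : ω = true)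
  refine ⟨id, fun F G => imp_iff_not_or, fun t F => (E_subset_ts_iff true t F).symm,
    fun _ _ _ h => ⟨h, h⟩, fun s t => ?_, fun _ _ h => absurd h (Set.notMem_empty _)⟩
  rw [APP_eq_empty]
  exact fun _ _ F hF => absurd hF (Set.notMem_empty F)

theorem isNoCModel : IsNoCModel ∅ botModel :=
  ⟨coreConds, fun _ _ _ => ⟨false, false_noContradiction, rfl⟩⟩

end botModel

/-- For the empty constant specification there is a NoC CS-subset model with a normal
world ω and a term t such that M, ω ⊩ t:⊥. -/
theorem stmt_13 :
    ∃ M : SModel, IsNoCModel (∅ : Set (Nat × Fm)) M ∧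
      ∃ ω ∈ M.W0, ∃ t : Tm, M.V ω (Fm.just t Fm.bot) :=
  ⟨botModel, botModel.isNoCModel, true, rfl, .var 0, rfl⟩
end

section
/- Let CS = ∅ be the empty constant specification for JNoC. Then for every justification term t, JNoC_CS does not prove ¬(t:⊥). In particular, the axiom schema jd is not derivable in JNoC with an arbitrary constant specification. -/
/-!
Evaluate formulas classically, reading every `t:F` as true exactly when `F` is `⊥`.
This valuation satisfies j+ trivially, j because `A → B` is never `⊥`, and noc because `A` and
`¬A` cannot both be `⊥`; modus ponens preserves truth, and the empty constant specification
adds nothing else. But it makes `t:⊥` true, so `¬(t:⊥)` is not derivable.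
-/

theorem Deriv.eval_eq_true {Ax : Fm → Prop} {CS : Set (Nat × Fm)} (v : Fm → Bool)
    (himp : ∀ F G : Fm, v (Fm.imp F G) = (!(v F) || v G))
    (hAx : ∀ A : Fm, Ax A → v A = true)
    (hCS : ∀ (c : Nat) (A : Fm) (n : Nat), (c, A) ∈ CS → v (anFm n (Tm.const c) A) = true)
    {A : Fm} (h : Deriv Ax CS A) : v A = true := by
  induction h with
  | ax hA => exact hAx _ hA
  | mp _ _ ihAB ihA => simpa [himp, ihA] using ihAB
  | an n hc => exact hCS _ _ n hc

def justBotVal : Fm → Bool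
  | Fm.prop _ => true
  | Fm.bot => false
  | Fm.imp F G => !(justBotVal F) || justBotVal G
  | Fm.just _ Fm.bot => true
  | Fm.just _ _ => false

theorem justBotVal_of_jnocAxiom {A : Fm} (h : JNoCAxiom A) : justBotVal A = true := by
  cases h with
  | cl hA => exact hA justBotVal rfl fun _ _ => rfl
  | jplus _ _ A => cases A <;> simp [justBotVal, Fm.disj, Fm.neg]
  | j => simp [justBotVal]
  | noc _ A => cases A <;> simp [justBotVal, Fm.conj, Fm.neg]

/-- For the empty constant specification, JNoC_CS does not prove ¬(t:⊥) for any term t. -/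
theorem stmt_14 (t : Tm) :
    ¬ Deriv JNoCAxiom (∅ : Set (Nat × Fm)) (Fm.neg (Fm.just t Fm.bot)) := fun h => by
  have := h.eval_eq_true justBotVal (fun _ _ => rfl) (fun _ => justBotVal_of_jnocAxiom)
    (fun _ _ _ hc => absurd hc (Set.notMem_empty _))
  simp [justBotVal, Fm.neg] at this
end
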